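/- Let k be a field of characteristic zero and V a vector space over k. In the complete tensor Hopf algebra structure on T(V) (or its completion) where each v ∈ V is primitive, i.e. Δ(v) = v⊗1 + 1⊗v, the set of primitive elements of the (non-completed) tensor Hopf algebra T(V) is exactly the free Lie algebra on V, i.e. the Lie subalgebra of T(V) generated by V under commutators (Friedrichs' criterion). -/

import Mathlib

/-!
Primitive elements form a Lie subalgebra containing `V`, which gives one inclusion.
Conversely, let `E` be the Euler derivation (multiplication by `n` in degree `n`) and
`S ⋆ g = μ ∘ (S ⊗ g) ∘ Δ` the convolution with the antipode. From `Δ (v x) = (v ⊗ 1 + 1 ⊗ v) Δ x`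
one gets `(S ⋆ g) (v x) = (S ⋆ (g L_v - L_v g)) x`; by induction on words, `S ⋆ L_y` maps into
the free Lie algebra `𝔏` whenever `y ∈ 𝔏`, and therefore so does `S ⋆ E`, because
`E L_v - L_v E = L_v`. On a primitive `x` we have `(S ⋆ E) x = E x`, so `E x ∈ 𝔏`. Finally a
primitive has no component of degree `0` and `E` preserves primitives; in characteristic zero
all the eigenvalues `n` of its components are invertible, and peeling them off one at a time
(`x - n⁻¹ E x` loses the degree-`n` component) shows `x ∈ 𝔏`.
-/

open TensorProduct

attribute [local instance 100] LieRing.ofAssociativeRing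

/-- The shuffle-compatible comultiplication on the tensor algebra `T(V)`, the algebra
map determined by `Δ(v) = v ⊗ 1 + 1 ⊗ v` for `v ∈ V`. -/
noncomputable def tensorComul (k V : Type*) [Field k] [AddCommGroup V] [Module k V] :
    TensorAlgebra k V →ₐ[k] TensorAlgebra k V ⊗[k] TensorAlgebra k V :=
  TensorAlgebra.lift k
    (((TensorProduct.mk k (TensorAlgebra k V) (TensorAlgebra k V)).flip 1).comp
        (TensorAlgebra.ι k) +
      (TensorProduct.mk k (TensorAlgebra k V) (TensorAlgebra k V) 1).comp
        (TensorAlgebra.ι k))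

theorem Submodule.sum_mem_of_eigenvectors {k M ι : Type*} [Field k] [AddCommGroup M]
    [Module k M] {E : M →ₗ[k] M} {P L : Submodule k M} (hP : ∀ x ∈ P, E x ∈ P)
    (hL : ∀ x ∈ P, E x ∈ L) {c : ι → k} {f : ι → M} (hf : ∀ i, E (f i) = c i • f i)
    {F : Finset ι} (hc : ∀ i ∈ F, c i ≠ 0) (hx : ∑ i ∈ F, f i ∈ P) : ∑ i ∈ F, f i ∈ L := by
  classical
  induction F using Finset.induction_on generalizing f with
  | empty => simp
  | insert i s hi ih =>
    -- `x - (c i)⁻¹ • E x` has no `f i` component and stays in `P`.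
    set x := ∑ j ∈ insert i s, f j
    have hci : c i ≠ 0 := hc i (Finset.mem_insert_self i s)
    set g : ι → M := fun j => (1 - (c i)⁻¹ * c j) • f j
    have hg : ∀ j, E (g j) = c j • g j := fun j => by
      simp only [g, map_smul, hf, smul_comm (c j)]
    have hgi : g i = 0 := by simp [g, inv_mul_cancel₀ hci]
    have hxg : x - (c i)⁻¹ • E x = ∑ j ∈ s, g j := by
      rw [← add_zero (∑ j ∈ s, g j), ← hgi, add_comm, ← Finset.sum_insert hi]
      simp only [x, g, map_sum, hf, Finset.smul_sum, ← Finset.sum_sub_distrib, smul_smul,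
        sub_smul, one_smul]
    have hsL : ∑ j ∈ s, g j ∈ L :=
      ih hg (fun j hj => hc j (Finset.mem_insert_of_mem hj))
        (hxg ▸ P.sub_mem hx (P.smul_mem _ (hP x hx)))
    rw [← sub_add_cancel x ((c i)⁻¹ • E x), hxg]
    exact L.add_mem hsL (L.smul_mem _ (hL x hx))

section Leibniz

variable {R A B : Type*} [CommSemiring R] [Semiring A] [Algebra R A] [Semiring B] [Algebra R B]
  {D : A →ₗ[R] A}

theorem LinearMap.rTensor_mul_of_leibniz (hD : ∀ a b, D (a * b) = a * D b + D a * b)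
    (s t : A ⊗[R] B) : D.rTensor B (s * t) = s * D.rTensor B t + D.rTensor B s * t := by
  induction s with
  | zero => simp
  | add s s' hs hs' => simp only [add_mul, map_add, hs, hs']; abel
  | tmul a b =>
    induction t with
    | zero => simp
    | add t t' ht ht' => simp only [mul_add, map_add, ht, ht']; abel
    | tmul c d => simp [hD, add_tmul]

theorem LinearMap.lTensor_mul_of_leibniz (hD : ∀ a b, D (a * b) = a * D b + D a * b)
    (s t : B ⊗[R] A) : D.lTensor B (s * t) = s * D.lTensor B t + D.lTensor B s * t := by
  induction s with
  | zero => simp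
  | add s s' hs hs' => simp only [add_mul, map_add, hs, hs']; abel
  | tmul a b =>
    induction t with
    | zero => simp
    | add t t' ht ht' => simp only [mul_add, map_add, ht, ht']; abel
    | tmul c d => simp [hD, tmul_add]

end Leibniz

namespace TensorAlgebra

section CommSemiring

variable {R M : Type*} [CommSemiring R] [AddCommMonoid M] [Module R M]

@[elab_as_elim]
theorem induction_ι_mul {C : TensorAlgebra R M → Prop}
    (algebraMap : ∀ r, C (algebraMap R (TensorAlgebra R M) r))
    (add : ∀ x y, C x → C y → C (x + y)) (ι_mul : ∀ v x, C x → C (ι R v * x))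
    (x : TensorAlgebra R M) : C x := by
  classical
  rw [← DirectSum.sum_support_decompose (fun n => LinearMap.range (ι R (M := M)) ^ n) x]
  refine Finset.sum_induction _ C add (by simpa using algebraMap 0) fun n _ => ?_
  refine Submodule.pow_induction_on_left _ algebraMap add ?_ (SetLike.coe_mem _)
  rintro _ ⟨v, rfl⟩ x hx
  exact ι_mul v x hx

-- `x ↦ (x, E x)`: a derivation is the second component of an algebra map into `A ⊕ A ε`.
private noncomputable def eulerLift :
    TensorAlgebra R M →ₐ[R] TrivSqZeroExt (TensorAlgebra R M) (TensorAlgebra R M) :=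
  lift R
    { toFun v := (ι R v, ι R v)
      map_add' v w := by ext <;> simp <;> rfl
      map_smul' r v := by ext <;> simp <;> rfl }

private theorem fst_eulerLift (x : TensorAlgebra R M) : (eulerLift x).fst = x := by
  suffices (TrivSqZeroExt.fstHom R _ _).comp eulerLift = AlgHom.id R (TensorAlgebra R M) from
    DFunLike.congr_fun this x
  ext v
  simp [eulerLift]
  rfl

variable (R) in
noncomputable def euler : TensorAlgebra R M →ₗ[R] TensorAlgebra R M :=
  { toFun x := (eulerLift x).snd
    map_add' x y := by simp
    map_smul' r x := by simp }

@[simp]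
theorem euler_ι (v : M) : euler R (ι R v) = ι R v := by
  simp [euler, eulerLift]
  rfl

@[simp]
theorem euler_algebraMap (r : R) : euler R (algebraMap R (TensorAlgebra R M) r) = 0 := by
  simp [euler]
  rfl

@[simp]
theorem euler_one : euler R (1 : TensorAlgebra R M) = 0 := by
  simpa using euler_algebraMap (M := M) (1 : R)

theorem euler_mul (x y : TensorAlgebra R M) :
    euler R (x * y) = x * euler R y + euler R x * y := by
  simp [euler, TrivSqZeroExt.snd_mul, fst_eulerLift]

theorem euler_of_mem_pow {n : ℕ} {x : TensorAlgebra R M}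
    (hx : x ∈ LinearMap.range (ι R (M := M)) ^ n) : euler R x = (n : R) • x := by
  induction hx using Submodule.pow_induction_on_left' with
  | algebraMap r => simp
  | add x y i hx hy ihx ihy => rw [map_add, ihx, ihy, smul_add]
  | mem_mul m hm i x hx ih =>
    obtain ⟨v, rfl⟩ := hm
    rw [euler_mul, ih, euler_ι, mul_smul_comm, Nat.cast_succ, add_smul, one_smul]

theorem algebraMapInv_eq_zero_of_mem_pow {n : ℕ} (hn : n ≠ 0) {x : TensorAlgebra R M}
    (hx : x ∈ LinearMap.range (ι R (M := M)) ^ n) : algebraMapInv x = 0 := by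
  obtain ⟨m, rfl⟩ := Nat.exists_eq_succ_of_ne_zero hn
  rw [pow_succ'] at hx
  induction hx using Submodule.mul_induction_on' with
  | mem_mul_mem a ha b _ =>
    obtain ⟨v, rfl⟩ := ha
    simp [algebraMapInv]
  | add a _ b _ ha hb => rw [map_add, ha, hb, add_zero]

theorem exists_sum_mem_pow_of_algebraMapInv_eq_zero {x : TensorAlgebra R M}
    (hx : algebraMapInv x = 0) :
    ∃ (F : Finset ℕ) (f : ℕ → TensorAlgebra R M), 0 ∉ F ∧
      (∀ n, f n ∈ LinearMap.range (ι R (M := M)) ^ n) ∧ x = ∑ n ∈ F, f n := by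
  classical
  set 𝒜 : ℕ → Submodule R (TensorAlgebra R M) := (LinearMap.range (ι R) ^ ·)
  set f : ℕ → TensorAlgebra R M := fun n => DirectSum.decompose 𝒜 x n
  have hsum : x = ∑ n ∈ (DirectSum.decompose 𝒜 x).support, f n :=
    (DirectSum.sum_support_decompose 𝒜 x).symm
  obtain ⟨r, hr⟩ : f 0 ∈ Set.range (algebraMap R _) := by
    simpa [𝒜] using (DirectSum.decompose 𝒜 x 0).2
  have hf0 : f 0 = 0 := by
    suffices r = 0 by rw [← hr, this, map_zero]
    have : algebraMapInv x = algebraMapInv (f 0) := by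
      rw [hsum, map_sum]
      refine Finset.sum_eq_single 0 (fun n _ hn => ?_) (fun h0 => ?_)
      · exact algebraMapInv_eq_zero_of_mem_pow hn (DirectSum.decompose 𝒜 x n).2
      · simp [f, DFinsupp.notMem_support_iff.mp h0]
    rwa [hx, ← hr, algebraMapInv, AlgHom.commutes, Algebra.algebraMap_self, RingHom.id_apply,
      eq_comm] at this
  refine ⟨(DirectSum.decompose 𝒜 x).support.erase 0, f, Finset.notMem_erase 0 _,
    fun n => (DirectSum.decompose 𝒜 x n).2, ?_⟩
  rwa [Finset.sum_erase _ hf0]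

end CommSemiring

section CommRing

variable {R M : Type*} [CommRing R] [AddCommMonoid M] [Module R M]

noncomputable def antipodeOp : TensorAlgebra R M →ₐ[R] (TensorAlgebra R M)ᵐᵒᵖ :=
  lift R ((MulOpposite.opLinearEquiv R).toLinearMap ∘ₗ (-(ι R)))

variable (R) in
noncomputable def antipode : TensorAlgebra R M →ₗ[R] TensorAlgebra R M :=
  (MulOpposite.opLinearEquiv R).symm.toLinearMap ∘ₗ antipodeOp.toLinearMap

@[simp]
theorem antipode_one : antipode R (1 : TensorAlgebra R M) = 1 := by simp [antipode]

theorem antipode_mul (x y : TensorAlgebra R M) :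
    antipode R (x * y) = antipode R y * antipode R x := by
  simp [antipode]

@[simp]
theorem antipode_ι (v : M) : antipode R (ι R v) = -ι R v := by
  simp [antipode, antipodeOp]

end CommRing

section Field

variable {k V : Type*} [Field k] [AddCommGroup V] [Module k V]

@[simp]
theorem tensorComul_ι (v : V) :
    tensorComul k V (ι k v) = ι k v ⊗ₜ[k] 1 + 1 ⊗ₜ[k] ι k v := by
  simp [tensorComul]

theorem tensorComul_euler (x : TensorAlgebra k V) :
    tensorComul k V (euler k x) =
      (euler k).rTensor _ (tensorComul k V x) + (euler k).lTensor _ (tensorComul k V x) := by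
  induction x using TensorAlgebra.induction with
  | algebraMap r => simp
  | ι v => simp
  | mul x y hx hy =>
    rw [euler_mul, map_add, map_mul, map_mul, hx, hy, map_mul,
      LinearMap.rTensor_mul_of_leibniz euler_mul, LinearMap.lTensor_mul_of_leibniz euler_mul]
    noncomm_ring
  | add x y hx hy => simp only [map_add, hx, hy]; abel

variable (k V) in
noncomputable def primitives : LieSubalgebra k (TensorAlgebra k V) where
  __ := LinearMap.eqLocus (tensorComul k V).toLinearMap
    ((TensorProduct.mk k (TensorAlgebra k V) (TensorAlgebra k V)).flip 1 +
      TensorProduct.mk k (TensorAlgebra k V) (TensorAlgebra k V) 1)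
  lie_mem' {x y} hx hy := by
    change tensorComul k V x = x ⊗ₜ 1 + 1 ⊗ₜ x at hx
    change tensorComul k V y = y ⊗ₜ 1 + 1 ⊗ₜ y at hy
    change tensorComul k V ⁅x, y⁆ = ⁅x, y⁆ ⊗ₜ 1 + 1 ⊗ₜ ⁅x, y⁆
    simp only [Ring.lie_def, map_sub, map_mul, hx, hy, add_mul, mul_add,
      Algebra.TensorProduct.tmul_mul_tmul, one_mul, mul_one, sub_tmul, tmul_sub]
    abel

theorem mem_primitives {x : TensorAlgebra k V} :
    x ∈ primitives k V ↔ tensorComul k V x = x ⊗ₜ 1 + 1 ⊗ₜ x :=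
  Iff.rfl

theorem lieSpan_range_ι_le_primitives :
    LieSubalgebra.lieSpan k _ (Set.range (ι k)) ≤ primitives k V := by
  rw [LieSubalgebra.lieSpan_le]
  rintro _ ⟨v, rfl⟩
  exact tensorComul_ι v

theorem euler_mem_primitives {x : TensorAlgebra k V} (hx : x ∈ primitives k V) :
    euler k x ∈ primitives k V := by
  rw [mem_primitives, tensorComul_euler, mem_primitives.mp hx]
  simp only [map_add, LinearMap.rTensor_tmul, LinearMap.lTensor_tmul, euler_one, tmul_zero,
    zero_tmul]
  abel

noncomputable def antipodeConv (g : TensorAlgebra k V →ₗ[k] TensorAlgebra k V) :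
    TensorAlgebra k V →ₗ[k] TensorAlgebra k V :=
  LinearMap.mul' k _ ∘ₗ TensorProduct.map (antipode k) g ∘ₗ (tensorComul k V).toLinearMap

theorem antipodeConv_algebraMap (g : TensorAlgebra k V →ₗ[k] TensorAlgebra k V) (r : k) :
    antipodeConv g (algebraMap k _ r) = r • g 1 := by
  simp [antipodeConv, Algebra.algebraMap_eq_smul_one, Algebra.TensorProduct.one_def]

theorem antipodeConv_of_mem_primitives (g : TensorAlgebra k V →ₗ[k] TensorAlgebra k V)
    {x : TensorAlgebra k V} (hx : x ∈ primitives k V) :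
    antipodeConv g x = antipode k x * g 1 + g x := by
  simp [antipodeConv, mem_primitives.mp hx]

theorem antipodeConv_ι_mul (g : TensorAlgebra k V →ₗ[k] TensorAlgebra k V) (v : V)
    (x : TensorAlgebra k V) :
    antipodeConv g (ι k v * x) =
      antipodeConv (g ∘ₗ LinearMap.mulLeft k (ι k v) - LinearMap.mulLeft k (ι k v) ∘ₗ g) x := by
  simp only [antipodeConv, LinearMap.comp_apply, AlgHom.toLinearMap_apply, map_mul,
    tensorComul_ι]
  generalize tensorComul k V x = t
  induction t with
  | zero => simp
  | add s t hs ht => simp only [mul_add, map_add, hs, ht]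
  | tmul a b =>
    simp [add_mul, antipode_mul]
    noncomm_ring

theorem antipodeConv_mulLeft_mem_lieSpan (x : TensorAlgebra k V) {y : TensorAlgebra k V}
    (hy : y ∈ LieSubalgebra.lieSpan k _ (Set.range (ι k))) :
    antipodeConv (LinearMap.mulLeft k y) x ∈ LieSubalgebra.lieSpan k _ (Set.range (ι k)) := by
  induction x using induction_ι_mul generalizing y with
  | algebraMap r => simpa [antipodeConv_algebraMap] using Submodule.smul_mem _ r hy
  | add x x' hx hx' => simpa using add_mem (hx hy) (hx' hy)
  | ι_mul v x hx =>
    have hcomm : LinearMap.mulLeft k y ∘ₗ LinearMap.mulLeft k (ι k v) -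
        LinearMap.mulLeft k (ι k v) ∘ₗ LinearMap.mulLeft k y =
        LinearMap.mulLeft k ⁅y, ι k v⁆ := by
      ext z
      simp [Ring.lie_def, sub_mul, mul_assoc]
    rw [antipodeConv_ι_mul, hcomm]
    exact hx (LieSubalgebra.lie_mem _ hy (LieSubalgebra.subset_lieSpan ⟨v, rfl⟩))

theorem antipodeConv_euler_mem_lieSpan (x : TensorAlgebra k V) :
    antipodeConv (euler k) x ∈ LieSubalgebra.lieSpan k _ (Set.range (ι k)) := by
  induction x using induction_ι_mul with
  | algebraMap r => simp [antipodeConv_algebraMap]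
  | add x x' hx hx' => simpa using add_mem hx hx'
  | ι_mul v x _ =>
    have hcomm : euler k ∘ₗ LinearMap.mulLeft k (ι k v) -
        LinearMap.mulLeft k (ι k v) ∘ₗ euler k = LinearMap.mulLeft k (ι k v) := by
      ext z
      simp [euler_mul]
    rw [antipodeConv_ι_mul, hcomm]
    exact antipodeConv_mulLeft_mem_lieSpan x (LieSubalgebra.subset_lieSpan ⟨v, rfl⟩)

theorem algebraMapInv_eq_zero_of_mem_primitives {x : TensorAlgebra k V}
    (hx : x ∈ primitives k V) : algebraMapInv x = 0 := by
  let ε₂ : TensorAlgebra k V ⊗[k] TensorAlgebra k V →ₐ[k] k :=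
    Algebra.TensorProduct.lift algebraMapInv algebraMapInv fun _ _ => Commute.all _ _
  have hcounit : ε₂.comp (tensorComul k V) = algebraMapInv := by
    ext v
    simp [ε₂, algebraMapInv]
  have h := congrArg ε₂ (mem_primitives.mp hx)
  rw [← AlgHom.comp_apply, hcounit] at h
  simpa [ε₂] using h

theorem euler_mem_lieSpan_of_mem_primitives {x : TensorAlgebra k V} (hx : x ∈ primitives k V) :
    euler k x ∈ LieSubalgebra.lieSpan k _ (Set.range (ι k)) := by
  simpa [antipodeConv_of_mem_primitives _ hx] using antipodeConv_euler_mem_lieSpan x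

theorem primitives_le_lieSpan_range_ι [CharZero k] :
    primitives k V ≤ LieSubalgebra.lieSpan k _ (Set.range (ι k)) := by
  intro x hx
  obtain ⟨F, f, hF, hf, rfl⟩ :=
    exists_sum_mem_pow_of_algebraMapInv_eq_zero (algebraMapInv_eq_zero_of_mem_primitives hx)
  exact Submodule.sum_mem_of_eigenvectors (P := (primitives k V).toSubmodule)
    (L := (LieSubalgebra.lieSpan k _ (Set.range (ι k))).toSubmodule)
    (fun _ => euler_mem_primitives) (fun _ => euler_mem_lieSpan_of_mem_primitives)
    (fun n => euler_of_mem_pow (hf n))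
    (fun n hn => Nat.cast_ne_zero.mpr (ne_of_mem_of_not_mem hn hF)) hx

theorem lieSpan_range_ι_eq_primitives [CharZero k] :
    LieSubalgebra.lieSpan k _ (Set.range (ι k)) = primitives k V :=
  le_antisymm lieSpan_range_ι_le_primitives primitives_le_lieSpan_range_ι

end Field

end TensorAlgebra

/-- Friedrichs' criterion: over a field of characteristic zero, the primitive elements
of the tensor Hopf algebra `T(V)` (with every `v ∈ V` primitive) are exactly the free
Lie algebra on `V`, i.e. the Lie subalgebra of `T(V)` (under commutators) generated by
`V`. -/
theorem stmt_17 (k V : Type*) [Field k] [CharZero k] [AddCommGroup V] [Module k V] :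
    {x : TensorAlgebra k V | tensorComul k V x = x ⊗ₜ[k] 1 + 1 ⊗ₜ[k] x} =
      (LieSubalgebra.lieSpan k (TensorAlgebra k V)
        (Set.range (TensorAlgebra.ι k (M := V))) : Set (TensorAlgebra k V)) := by
  rw [TensorAlgebra.lieSpan_range_ι_eq_primitives]
  rfl
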